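/- Let 𝓗 be a complex Hilbert space, Λ a finite metric space with metric ρ, and (Z_i, H_i)_{i∈I} a finite family in which each Z_i is a nonempty subset of Λ and each H_i is a bounded self-adjoint operator on 𝓗. For R ≥ 0 set H^{≤R} = ∑_{i : diam(Z_i) ≤ R} H_i, where diam(Z) = max_{x,y∈Z} ρ(x,y). Fix reals 0 ≤ R' ≤ R and t ≥ 0, a nonempty subset X ⊆ Λ, bounded operators A and B on 𝓗, reals r₀ ≥ 0 and f' ≥ 0, and a nonnegative antitone function λ : ℝ → ℝ. Write d(X, S) = min_{x∈X, s∈S} ρ(x,s) for nonempty S ⊆ Λ. Assume: (i) for every s ∈ [0, t], ‖[τ_s^{H^{≤R'}}(A), B]‖ ≤ λ(r₀) ‖A‖ ‖B‖; (ii) for every s ∈ [0, t] and every i ∈ I with R' < diam(Z_i) ≤ R, ‖[τ_s^{H^{≤R'}}(A), H_i]‖ ≤ λ(d(X, Z_i)) ‖A‖ ‖H_i‖; (iii) for every z ∈ Λ, ∑_{i : z ∈ Z_i, diam(Z_i) > R'} ‖H_i‖ ≤ f'. Then ‖[τ_t^{H^{≤R}}(A), B]‖ ≤ ‖A‖ ‖B‖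 ( λ(r₀) + 2 t f' ∑_{z∈Λ} λ(d(X, z)) ). -/

import Mathlib

/-!
Interpolate between the two evolutions by `Φ s = τ_s^{H^{≤R}} (τ_{t-s}^{H^{≤R'}} A)`. Its
derivative is `i τ_s^{H^{≤R}} [H^{≤R} - H^{≤R'}, τ_{t-s}^{H^{≤R'}} A]`, and evolution under a self-adjoint
Hamiltonian is isometric, so `‖τ_t^{H^{≤R}} A - τ_t^{H^{≤R'}} A‖` is at most `t` times the size of
that commutator (Duhamel). The perturbation `H^{≤R} - H^{≤R'}` is the sum of the long-range terms;
by (ii) each contributes `λ(d(X, Z_i)) ‖A‖ ‖H_i‖`, and charging `λ(d(X, Z_i)) ≤ λ(d(X, {z}))` to a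
site `z ∈ Z_i` nearest to `X`, (iii) bounds their sum by `‖A‖ f' ∑_z λ(d(X, {z}))`. Finally
`[τ_t^{H^{≤R}} A, B]` differs from `[τ_t^{H^{≤R'}} A, B]`, which (i) controls, by at most
`2 ‖τ_t^{H^{≤R}} A - τ_t^{H^{≤R'}} A‖ ‖B‖`.
-/

open MeasureTheory intervalIntegral Classical

variable {𝓗 : Type*} [NormedAddCommGroup 𝓗] [InnerProductSpace ℂ 𝓗] [CompleteSpace 𝓗]

/-- Heisenberg evolution `τ_t^H(A) = e^{itH} A e^{−itH}` of a bounded operator `A`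
under a bounded Hamiltonian `H`. -/
noncomputable def heisenberg (H : 𝓗 →L[ℂ] 𝓗) (t : ℝ) (A : 𝓗 →L[ℂ] 𝓗) : 𝓗 →L[ℂ] 𝓗 :=
  NormedSpace.exp ((Complex.I * (t : ℂ)) • H) * A *
    NormedSpace.exp (-((Complex.I * (t : ℂ)) • H))

/-- The commutator `[A, B] = AB − BA` of two bounded operators. -/
def commutatorCLM (A B : 𝓗 →L[ℂ] 𝓗) : 𝓗 →L[ℂ] 𝓗 := A * B - B * A

/-- The distance `d(X, S) = min_{x ∈ X, s ∈ S} ρ(x, s)` between two subsets of a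
metric space, written as an infimum. -/
noncomputable def setDist {Λ : Type*} [MetricSpace Λ] (X S : Set Λ) : ℝ :=
  sInf (Set.image2 dist X S)

open NormedSpace

section Commutator

omit [CompleteSpace 𝓗]

variable (A A' B : 𝓗 →L[ℂ] 𝓗)

lemma commutatorCLM_sub_left :
    commutatorCLM (A - A') B = commutatorCLM A B - commutatorCLM A' B := by
  simp only [commutatorCLM, sub_mul, mul_sub]
  abel

lemma neg_commutatorCLM : -commutatorCLM A B = commutatorCLM B A := by
  simp only [commutatorCLM, neg_sub]

lemma commutatorCLM_sum_right {ι : Type*} (s : Finset ι) (B : ι → 𝓗 →L[ℂ] 𝓗) :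
    commutatorCLM A (∑ i ∈ s, B i) = ∑ i ∈ s, commutatorCLM A (B i) := by
  simp only [commutatorCLM, Finset.mul_sum, Finset.sum_mul, Finset.sum_sub_distrib]

lemma norm_commutatorCLM_le : ‖commutatorCLM A B‖ ≤ 2 * ‖A‖ * ‖B‖ :=
  calc ‖A * B - B * A‖ ≤ ‖A‖ * ‖B‖ + ‖B‖ * ‖A‖ :=
        (norm_sub_le _ _).trans (add_le_add (norm_mul_le _ _) (norm_mul_le _ _))
    _ = 2 * ‖A‖ * ‖B‖ := by ring

lemma norm_commutatorCLM_le_add :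
    ‖commutatorCLM A B‖ ≤ ‖commutatorCLM A' B‖ + 2 * ‖A - A'‖ * ‖B‖ :=
  calc ‖commutatorCLM A B‖ = ‖commutatorCLM A' B + commutatorCLM (A - A') B‖ := by
        rw [commutatorCLM_sub_left, add_sub_cancel]
    _ ≤ ‖commutatorCLM A' B‖ + 2 * ‖A - A'‖ * ‖B‖ :=
        (norm_add_le _ _).trans (by gcongr; exact norm_commutatorCLM_le _ _)

end Commutator

section Heisenberg

variable (H : 𝓗 →L[ℂ] 𝓗)

lemma heisenberg_zero (A : 𝓗 →L[ℂ] 𝓗) : heisenberg H 0 A = A := by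
  simp [heisenberg]

lemma heisenberg_smul (c : ℂ) (t : ℝ) (A : 𝓗 →L[ℂ] 𝓗) :
    heisenberg H t (c • A) = c • heisenberg H t A := by
  simp only [heisenberg, mul_smul_comm, smul_mul_assoc]

lemma heisenberg_commutatorCLM_self (t : ℝ) (A : 𝓗 →L[ℂ] 𝓗) :
    heisenberg H t (commutatorCLM H A) = commutatorCLM H (heisenberg H t A) := by
  have hU := (((Commute.refl H).smul_right (Complex.I * (t : ℂ))).exp_right).eq
  have hV := (((Commute.refl H).smul_right (Complex.I * (t : ℂ))).neg_right.exp_right).eq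
  simp only [heisenberg, commutatorCLM, mul_sub, sub_mul, mul_assoc] at hU hV ⊢
  rw [hV, ← mul_assoc H (exp _), hU, mul_assoc]

lemma norm_heisenberg (hH : IsSelfAdjoint H) (t : ℝ) (A : 𝓗 →L[ℂ] 𝓗) :
    ‖heisenberg H t A‖ = ‖A‖ := by
  have hunitary : ∀ s : ℝ, exp ((Complex.I * (s : ℂ)) • H) ∈ unitary (𝓗 →L[ℂ] 𝓗) := fun s => by
    have hs : IsSelfAdjoint ((s : ℂ) • H) := IsSelfAdjoint.smul (Complex.conj_ofReal s) hH
    have := (selfAdjoint.expUnitary ⟨_, hs⟩).prop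
    rwa [selfAdjoint.expUnitary_coe, smul_smul] at this
  have hneg : -((Complex.I * (t : ℂ)) • H) = (Complex.I * ((-t : ℝ) : ℂ)) • H := by
    push_cast; rw [mul_neg, neg_smul]
  rw [heisenberg, hneg, CStarRing.norm_mul_mem_unitary _ (hunitary _),
    CStarRing.norm_mem_unitary_mul _ (hunitary _)]

lemma heisenberg_eq_exp_smul (t : ℝ) (A : 𝓗 →L[ℂ] 𝓗) :
    heisenberg H t A =
      exp ((t : ℂ) • (Complex.I • H)) * A * exp ((t : ℂ) • -(Complex.I • H)) := by
  simp only [heisenberg, smul_smul, smul_neg, mul_comm (t : ℂ)]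

lemma HasDerivAt.heisenberg {X : ℝ → 𝓗 →L[ℂ] 𝓗} {X' : 𝓗 →L[ℂ] 𝓗} {s : ℝ}
    (hX : HasDerivAt X X' s) :
    HasDerivAt (fun u => heisenberg H u (X u))
      (heisenberg H s (Complex.I • commutatorCLM H (X s) + X')) s := by
  have hs := (hasDerivAt_id s).ofReal_comp
  have hU := (hasDerivAt_exp_smul_const (Complex.I • H) (s : ℂ)).scomp s hs
  have hV := (hasDerivAt_exp_smul_const' (-(Complex.I • H)) (s : ℂ)).scomp s hs
  simp only [heisenberg_eq_exp_smul]
  refine ((hU.mul hX).mul hV).congr_deriv ?_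
  simp only [Function.comp_apply, Pi.mul_apply, Complex.ofReal_one, one_smul, commutatorCLM,
    smul_sub, smul_mul_assoc, mul_smul_comm]
  noncomm_ring

lemma hasDerivAt_heisenberg (A : 𝓗 →L[ℂ] 𝓗) (s : ℝ) :
    HasDerivAt (fun u => heisenberg H u A)
      (Complex.I • commutatorCLM H (heisenberg H s A)) s := by
  simpa [heisenberg_smul, heisenberg_commutatorCLM_self] using
    (hasDerivAt_const s A).heisenberg H

end Heisenberg

theorem norm_heisenberg_sub_le {H₀ H₁ : 𝓗 →L[ℂ] 𝓗} (hH₁ : IsSelfAdjoint H₁)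
    (A : 𝓗 →L[ℂ] 𝓗) {t M : ℝ} (ht : 0 ≤ t)
    (hM : ∀ s ∈ Set.Icc 0 t, ‖commutatorCLM (heisenberg H₀ s A) (H₁ - H₀)‖ ≤ M) :
    ‖heisenberg H₁ t A - heisenberg H₀ t A‖ ≤ M * t := by
  set Φ : ℝ → 𝓗 →L[ℂ] 𝓗 := fun s => heisenberg H₁ s (heisenberg H₀ (t - s) A)
  have hΦ : ∀ s, HasDerivAt Φ
      (heisenberg H₁ s (Complex.I • commutatorCLM (H₁ - H₀) (heisenberg H₀ (t - s) A))) s :=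
    fun s => by
      have := ((hasDerivAt_heisenberg H₀ A (t - s)).comp_const_sub t s).heisenberg H₁
      rwa [commutatorCLM_sub_left, smul_sub, sub_eq_add_neg]
  have hbound : ∀ s ∈ Set.Ico 0 t,
      ‖heisenberg H₁ s (Complex.I • commutatorCLM (H₁ - H₀) (heisenberg H₀ (t - s) A))‖ ≤ M := by
    rintro s ⟨hs0, hst⟩
    rw [norm_heisenberg H₁ hH₁, norm_smul, Complex.norm_I, one_mul, ← neg_commutatorCLM,
      norm_neg]
    exact hM (t - s) ⟨by linarith, by linarith⟩
  have := norm_image_sub_le_of_norm_deriv_le_segment'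
    (fun s _ => (hΦ s).hasDerivWithinAt) hbound t ⟨ht, le_rfl⟩
  simpa [Φ, heisenberg_zero] using this

lemma Finset.sum_filter_le_sub_sum_filter_le {ι α E : Type*} [LinearOrder α] [AddCommGroup E]
    (s : Finset ι) (d : ι → α) (f : ι → E) {a b : α} (hab : a ≤ b) :
    ∑ i ∈ s with d i ≤ b, f i - ∑ i ∈ s with d i ≤ a, f i =
      ∑ i ∈ s with a < d i ∧ d i ≤ b, f i := by
  simp only [Finset.sum_filter, ← Finset.sum_sub_distrib]
  refine Finset.sum_congr rfl fun i _ => ?_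
  split_ifs <;> first | (exfalso; grind) | abel

lemma exists_mem_setDist_singleton_le {Λ : Type*} [MetricSpace Λ] [Finite Λ] {X Z : Set Λ}
    (hX : X.Nonempty) (hZ : Z.Nonempty) : ∃ z ∈ Z, setDist X {z} ≤ setDist X Z := by
  have hne : (Set.image2 dist X Z).Nonempty := hX.image2 hZ
  obtain ⟨x, hx, z, hz, hxz⟩ := hne.csInf_mem (Set.toFinite _)
  refine ⟨z, hz, ?_⟩
  unfold setDist
  rw [← hxz]
  exact csInf_le (Set.toFinite _).bddBelow ⟨x, hx, z, rfl, rfl⟩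

lemma Finset.sum_mul_le_of_exists_mem_le {ι Λ : Type*} [Fintype Λ] (F : Finset ι)
    (Z : ι → Set Λ) {a w : ι → ℝ} {g : Λ → ℝ} {f : ℝ} (hg : ∀ z, 0 ≤ g z)
    (hw : ∀ i, 0 ≤ w i) (ha : ∀ i ∈ F, ∃ z ∈ Z i, a i ≤ g z)
    (hf : ∀ z, ∑ i ∈ F with z ∈ Z i, w i ≤ f) :
    ∑ i ∈ F, a i * w i ≤ f * ∑ z, g z :=
  calc ∑ i ∈ F, a i * w i ≤ ∑ i ∈ F, ∑ z with z ∈ Z i, g z * w i := by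
        refine Finset.sum_le_sum fun i hi => ?_
        obtain ⟨z, hz, hle⟩ := ha i hi
        exact (mul_le_mul_of_nonneg_right hle (hw i)).trans <|
          Finset.single_le_sum (f := fun z => g z * w i)
            (fun z _ => mul_nonneg (hg z) (hw i)) (by simpa using hz)
    _ = ∑ z, g z * ∑ i ∈ F with z ∈ Z i, w i := by
        simp only [Finset.sum_filter, Finset.mul_sum, mul_ite, mul_zero]
        exact Finset.sum_comm
    _ ≤ ∑ z, g z * f := Finset.sum_le_sum fun z _ => mul_le_mul_of_nonneg_left (hf z) (hg z)
    _ = f * ∑ z, g z := by rw [Finset.mul_sum]; simp only [mul_comm]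

theorem iteration_lemma_general
    {Λ : Type*} [Fintype Λ] [MetricSpace Λ]
    {I : Type*} [Fintype I] (Z : I → Set Λ) (H : I → (𝓗 →L[ℂ] 𝓗))
    (hZ : ∀ i, (Z i).Nonempty) (hH : ∀ i, IsSelfAdjoint (H i))
    (R' R t : ℝ) (hR'R : R' ≤ R) (ht : 0 ≤ t)
    (X : Set Λ) (hX : X.Nonempty)
    (A B : 𝓗 →L[ℂ] 𝓗)
    (r₀ f' : ℝ)
    (lam : ℝ → ℝ) (hlam0 : ∀ r, 0 ≤ lam r) (hlam : Antitone lam)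
    -- (i): Lieb-Robinson bound for the range-`R'` truncated evolution against `B`
    (hi : ∀ s ∈ Set.Icc (0 : ℝ) t,
      ‖commutatorCLM (heisenberg
          (∑ i ∈ Finset.univ.filter fun i => Metric.diam (Z i) ≤ R', H i) s A) B‖ ≤
        lam r₀ * ‖A‖ * ‖B‖)
    -- (ii): Lieb-Robinson bound for the range-`R'` truncated evolution against the
    -- long-range terms `H_i` with `R' < diam(Z_i) ≤ R`
    (hii : ∀ s ∈ Set.Icc (0 : ℝ) t, ∀ i : I,
      R' < Metric.diam (Z i) → Metric.diam (Z i) ≤ R →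
      ‖commutatorCLM (heisenberg
          (∑ i ∈ Finset.univ.filter fun i => Metric.diam (Z i) ≤ R', H i) s A) (H i)‖ ≤
        lam (setDist X (Z i)) * ‖A‖ * ‖H i‖)
    -- (iii): the long-range terms through any one site have total strength at most `f'`
    (hiii : ∀ z : Λ,
      (∑ i ∈ Finset.univ.filter fun i => z ∈ Z i ∧ R' < Metric.diam (Z i), ‖H i‖) ≤ f') :
    ‖commutatorCLM (heisenberg
        (∑ i ∈ Finset.univ.filter fun i => Metric.diam (Z i) ≤ R, H i) t A) B‖ ≤
      ‖A‖ * ‖B‖ * (lam r₀ + 2 * t * f' * ∑ z : Λ, lam (setDist X {z})) := by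
  set H₀ := ∑ i ∈ Finset.univ.filter fun i => Metric.diam (Z i) ≤ R', H i
  set H₁ := ∑ i ∈ Finset.univ.filter fun i => Metric.diam (Z i) ≤ R, H i
  set F := Finset.univ.filter fun i => R' < Metric.diam (Z i) ∧ Metric.diam (Z i) ≤ R
  set S := ∑ z : Λ, lam (setDist X {z})
  have hlong : ∑ i ∈ F, lam (setDist X (Z i)) * ‖H i‖ ≤ f' * S := by
    refine Finset.sum_mul_le_of_exists_mem_le F Z (fun z => hlam0 _) (fun i => norm_nonneg _)
      (fun i _ => ?_) (fun z => le_trans ?_ (hiii z))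
    · obtain ⟨z, hz, hle⟩ := exists_mem_setDist_singleton_le hX (hZ i)
      exact ⟨z, hz, hlam hle⟩
    · refine Finset.sum_le_sum_of_subset_of_nonneg (fun i => ?_) fun i _ _ => norm_nonneg _
      simp only [F, Finset.mem_filter, Finset.mem_univ, true_and]
      tauto
  have hpert : ∀ s ∈ Set.Icc 0 t,
      ‖commutatorCLM (heisenberg H₀ s A) (H₁ - H₀)‖ ≤ ‖A‖ * (f' * S) := by
    intro s hs
    rw [Finset.sum_filter_le_sub_sum_filter_le _ _ _ hR'R, commutatorCLM_sum_right]
    calc _ ≤ ∑ i ∈ F, ‖commutatorCLM (heisenberg H₀ s A) (H i)‖ := norm_sum_le _ _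
      _ ≤ ∑ i ∈ F, ‖A‖ * (lam (setDist X (Z i)) * ‖H i‖) := Finset.sum_le_sum fun i hi => by
          obtain ⟨hR'i, hiR⟩ := (Finset.mem_filter.1 hi).2
          exact (hii s hs i hR'i hiR).trans_eq (by ring)
      _ ≤ ‖A‖ * (f' * S) := by rw [← Finset.mul_sum]; gcongr
  have hduhamel := norm_heisenberg_sub_le (isSelfAdjoint_sum _ fun i _ => hH i) A ht hpert
  calc _ ≤ ‖commutatorCLM (heisenberg H₀ t A) B‖ +
          2 * ‖heisenberg H₁ t A - heisenberg H₀ t A‖ * ‖B‖ := norm_commutatorCLM_le_add _ _ _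
    _ ≤ lam r₀ * ‖A‖ * ‖B‖ + 2 * (‖A‖ * (f' * S) * t) * ‖B‖ := by
        gcongr
        exact hi t ⟨ht, le_rfl⟩
    _ = _ := by ring

/-- Lemma III.1 of the paper: the iteration step upgrading a Lieb-Robinson bound `λ`
for the range-`R'` truncated Hamiltonian `H^{≤R'}` to a bound for the range-`R`
truncated Hamiltonian `H^{≤R}`. -/
theorem iteration_lemma
    {Λ : Type*} [Fintype Λ] [MetricSpace Λ]
    {I : Type*} [Fintype I] (Z : I → Set Λ) (H : I → (𝓗 →L[ℂ] 𝓗))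
    (hZ : ∀ i, (Z i).Nonempty) (hH : ∀ i, IsSelfAdjoint (H i))
    (R' R t : ℝ) (hR'0 : 0 ≤ R') (hR'R : R' ≤ R) (ht : 0 ≤ t)
    (X : Set Λ) (hX : X.Nonempty)
    (A B : 𝓗 →L[ℂ] 𝓗)
    (r₀ f' : ℝ) (hr₀ : 0 ≤ r₀) (hf' : 0 ≤ f')
    (lam : ℝ → ℝ) (hlam0 : ∀ r, 0 ≤ lam r) (hlam : Antitone lam)
    -- (i): Lieb-Robinson bound for the range-`R'` truncated evolution against `B`
    (hi : ∀ s ∈ Set.Icc (0 : ℝ) t,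
      ‖commutatorCLM (heisenberg
          (∑ i ∈ Finset.univ.filter fun i => Metric.diam (Z i) ≤ R', H i) s A) B‖ ≤
        lam r₀ * ‖A‖ * ‖B‖)
    -- (ii): Lieb-Robinson bound for the range-`R'` truncated evolution against the
    -- long-range terms `H_i` with `R' < diam(Z_i) ≤ R`
    (hii : ∀ s ∈ Set.Icc (0 : ℝ) t, ∀ i : I,
      R' < Metric.diam (Z i) → Metric.diam (Z i) ≤ R →
      ‖commutatorCLM (heisenberg
          (∑ i ∈ Finset.univ.filter fun i => Metric.diam (Z i) ≤ R', H i) s A) (H i)‖ ≤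
        lam (setDist X (Z i)) * ‖A‖ * ‖H i‖)
    -- (iii): the long-range terms through any one site have total strength at most `f'`
    (hiii : ∀ z : Λ,
      (∑ i ∈ Finset.univ.filter fun i => z ∈ Z i ∧ R' < Metric.diam (Z i), ‖H i‖) ≤ f') :
    ‖commutatorCLM (heisenberg
        (∑ i ∈ Finset.univ.filter fun i => Metric.diam (Z i) ≤ R, H i) t A) B‖ ≤
      ‖A‖ * ‖B‖ * (lam r₀ + 2 * t * f' * ∑ z : Λ, lam (setDist X {z})) :=
  iteration_lemma_general Z H hZ hH R' R t hR'R ht X hX A B r₀ f' lam hlam0 hlam hi hii hiii
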